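/- Let 2/3 ≤ α < 1 and p = n^{-α}. Then a.a.s. there exists a vertex v in G(n,p) whose neighborhood N(v) is an independent set. -/

import Mathlib

open Filter

-- `graphProb n p A` is the probability that the Erdős–Rényi random graph `G(n,p)` (each
-- of the `C(n,2)` possible edges present independently with probability `p`) satisfies
-- the property `A`.
open Classical in
noncomputable def graphProb (n : ℕ) (p : ℝ) (A : SimpleGraph (Fin n) → Prop) : ℝ :=
  ∑ G : SimpleGraph (Fin n),
    if A G then p ^ (Nat.card G.edgeSet) * (1 - p) ^ (n.choose 2 - Nat.card G.edgeSet) else 0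

/-!
If no vertex has an independent neighbourhood, every vertex lies on a triangle, so there are
at least `n / 3` triangles. For `p = n ^ (-α)` with `α ≥ 2 / 3` the expected number of
triangles is `C(n,3) p³ ≤ n / 6`. Two distinct triangles share at most one edge, and only
triangles sharing an edge are correlated, so the variance is at most `C(n,3) (p³ + 3 n p⁵)`.
Chebyshev's inequality then bounds the probability of `n / 3` triangles by
`(6 / n)² C(n,3) (p³ + 3 n p⁵) ≤ 24 / n`.
-/

open Finset SimpleGraph

section RandomSubset

variable {α : Type*}

/-- The probability that keeping each element of `s` independently with probability `p`
leaves exactly `t ⊆ s`. -/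
def subsetProb (p : ℝ) (s t : Finset α) : ℝ := p ^ #t * (1 - p) ^ (#s - #t)

theorem subsetProb_nonneg {p : ℝ} (hp0 : 0 ≤ p) (hp1 : p ≤ 1) (s t : Finset α) :
    0 ≤ subsetProb p s t :=
  mul_nonneg (pow_nonneg hp0 _) (pow_nonneg (sub_nonneg.2 hp1) _)

theorem sum_subsetProb (p : ℝ) (s : Finset α) : ∑ t ∈ s.powerset, subsetProb p s t = 1 := by
  simp only [subsetProb, sum_pow_mul_eq_add_pow, add_sub_cancel, one_pow]

theorem sum_filter_le_sum_mul_sq_div {S : Finset α} {w f : α → ℝ}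
    (hw : ∀ x ∈ S, 0 ≤ w x) (μ : ℝ) {a : ℝ} (ha : 0 < a) :
    ∑ x ∈ S with μ + a ≤ f x, w x ≤ (∑ x ∈ S, w x * (f x - μ) ^ 2) / a ^ 2 := by
  rw [le_div_iff₀ (by positivity), sum_mul, sum_filter]
  refine sum_le_sum fun x hx => ?_
  split_ifs with h
  · exact mul_le_mul_of_nonneg_left (pow_le_pow_left₀ ha.le (by linarith) 2) (hw x hx)
  · exact mul_nonneg (hw x hx) (sq_nonneg _)

variable [DecidableEq α]

theorem sum_subsetProb_filter_superset (p : ℝ) {s u : Finset α} (hu : u ⊆ s) :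
    ∑ t ∈ s.powerset with u ⊆ t, subsetProb p s t = p ^ #u := by
  have hdisj : ∀ v ∈ (s \ u).powerset, Disjoint u v := fun v hv =>
    disjoint_of_subset_right (mem_powerset.1 hv) disjoint_sdiff
  have hsplit : ∀ v ∈ (s \ u).powerset,
      subsetProb p s (u ∪ v) = p ^ #u * subsetProb p (s \ u) v := by
    intro v hv
    rw [subsetProb, subsetProb, card_union_of_disjoint (hdisj v hv), card_sdiff_of_subset hu,
      pow_add, Nat.sub_add_eq, mul_assoc]
  rw [← Icc_eq_filter_powerset, Icc_eq_image_powerset hu, sum_image, sum_congr rfl hsplit,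
    ← mul_sum, sum_subsetProb, mul_one]
  intro v hv w hw hvw
  rw [← union_sdiff_cancel_left (hdisj v hv), ← union_sdiff_cancel_left (hdisj w hw)]
  exact congrArg (· \ u) hvw

variable {ι : Type*} {p : ℝ} {s : Finset α} {I : Finset ι} {F : ι → Finset α}

theorem sum_subsetProb_mul_card_filter_subset (hF : ∀ i ∈ I, F i ⊆ s) :
    ∑ t ∈ s.powerset, subsetProb p s t * #{i ∈ I | F i ⊆ t} = ∑ i ∈ I, p ^ #(F i) := by
  simp only [natCast_card_filter, mul_sum, mul_boole]
  rw [sum_comm]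
  exact sum_congr rfl fun i hi => by rw [← sum_filter, sum_subsetProb_filter_superset p (hF i hi)]

theorem sum_subsetProb_mul_card_filter_subset_sq (hF : ∀ i ∈ I, F i ⊆ s) :
    ∑ t ∈ s.powerset, subsetProb p s t * (#{i ∈ I | F i ⊆ t} : ℝ) ^ 2 =
      ∑ i ∈ I, ∑ j ∈ I, p ^ #(F i ∪ F j) := by
  have hsq : ∀ t, (#{i ∈ I | F i ⊆ t} : ℝ) ^ 2 =
      ∑ i ∈ I, ∑ j ∈ I, if F i ∪ F j ⊆ t then 1 else 0 := fun t => by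
    simp only [sq, natCast_card_filter, sum_mul_sum, ite_zero_mul_ite_zero, mul_one,
      union_subset_iff]
  simp only [hsq, mul_sum, mul_boole]
  rw [sum_comm]
  refine sum_congr rfl fun i hi => ?_
  rw [sum_comm]
  refine sum_congr rfl fun j hj => ?_
  rw [← sum_filter, sum_subsetProb_filter_superset p (union_subset (hF i hi) (hF j hj))]

theorem sum_subsetProb_filter_le_sum_covariance_div_sq (hp0 : 0 ≤ p) (hp1 : p ≤ 1)
    (hF : ∀ i ∈ I, F i ⊆ s) {a : ℝ} (ha : 0 < a) :
    ∑ t ∈ s.powerset with ∑ i ∈ I, p ^ #(F i) + a ≤ #{i ∈ I | F i ⊆ t},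
        subsetProb p s t ≤
      (∑ i ∈ I, ∑ j ∈ I, (p ^ #(F i ∪ F j) - p ^ #(F i) * p ^ #(F j))) / a ^ 2 := by
  refine (sum_filter_le_sum_mul_sq_div (fun t _ => subsetProb_nonneg hp0 hp1 s t) _ ha).trans_eq
    (congrArg (· / a ^ 2) ?_)
  set μ := ∑ i ∈ I, p ^ #(F i)
  calc ∑ t ∈ s.powerset, subsetProb p s t * ((#{i ∈ I | F i ⊆ t} : ℝ) - μ) ^ 2
      = ∑ t ∈ s.powerset, subsetProb p s t * (#{i ∈ I | F i ⊆ t} : ℝ) ^ 2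
        - 2 * μ * ∑ t ∈ s.powerset, subsetProb p s t * #{i ∈ I | F i ⊆ t}
        + μ ^ 2 * ∑ t ∈ s.powerset, subsetProb p s t := by
        simp only [mul_sum, ← sum_sub_distrib, ← sum_add_distrib]
        exact sum_congr rfl fun t _ => by ring
    _ = ∑ i ∈ I, ∑ j ∈ I, p ^ #(F i ∪ F j) - μ * μ := by
        rw [sum_subsetProb_mul_card_filter_subset_sq hF,
          sum_subsetProb_mul_card_filter_subset hF, sum_subsetProb]
        ring
    _ = _ := by simp only [μ, sum_mul_sum, ← sum_sub_distrib]

end RandomSubset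

section EdgesOf

variable {α : Type*} [DecidableEq α]

def edgesOf (s : Finset α) : Finset (Sym2 α) := {e ∈ s.sym2 | ¬e.IsDiag}

theorem mk_mem_edgesOf {s : Finset α} {x y : α} :
    s(x, y) ∈ edgesOf s ↔ x ∈ s ∧ y ∈ s ∧ x ≠ y := by
  simp [edgesOf, and_assoc]

theorem card_edgesOf (s : Finset α) : #(edgesOf s) = (#s).choose 2 := by
  rw [edgesOf, sym2_eq_image, Sym2.filter_image_mk_not_isDiag, Sym2.card_image_offDiag]

theorem edgesOf_inter (s t : Finset α) : edgesOf (s ∩ t) = edgesOf s ∩ edgesOf t := by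
  ext e
  simp only [edgesOf, mem_filter, mem_inter, mem_sym2_iff]
  grind

theorem card_edgesOf_union_add_choose (s t : Finset α) :
    #(edgesOf s ∪ edgesOf t) + (#(s ∩ t)).choose 2 = (#s).choose 2 + (#t).choose 2 := by
  rw [← card_edgesOf, edgesOf_inter, card_union_add_card_inter, card_edgesOf, card_edgesOf]

theorem SimpleGraph.isClique_iff_edgesOf_subset {G : SimpleGraph α} {s : Finset α} :
    G.IsClique (s : Set α) ↔ (edgesOf s : Set (Sym2 α)) ⊆ G.edgeSet := by
  refine ⟨fun h e he => ?_, fun h x hx y hy hxy => h (mk_mem_edgesOf.2 ⟨hx, hy, hxy⟩)⟩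
  induction e using Sym2.ind with
  | h x y =>
    obtain ⟨hx, hy, hxy⟩ := mk_mem_edgesOf.1 he
    exact h hx hy hxy

theorem card_filter_card_inter_eq_le [Fintype α] (s : Finset α) (j k : ℕ) :
    #{t ∈ powersetCard k univ | #(s ∩ t) = j} ≤
      (#s).choose j * (Fintype.card α).choose (k - j) := by
  rw [← card_powersetCard j s, ← card_univ, ← card_powersetCard (k - j) univ,
    ← card_product]
  refine card_le_card_of_injOn (fun t => (s ∩ t, t \ s)) (fun t ht => ?_)
    (fun t₁ _ t₂ _ h => ?_)
  · simp only [coe_filter, mem_powersetCard, subset_univ, true_and, Set.mem_ofPred_eq] at ht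
    simp [mem_powersetCard, inter_subset_left, card_sdiff, ht.1, ht.2]
  · simp only [Prod.ext_iff] at h
    rw [← sdiff_union_inter t₁ s, ← sdiff_union_inter t₂ s, inter_comm t₁,
      inter_comm t₂, h.1, h.2]

end EdgesOf

namespace SimpleGraph

variable {V : Type*}

theorem isIndepSet_iff_forall_not_adj {G : SimpleGraph V} {s : Set V} :
    G.IsIndepSet s ↔ ∀ x ∈ s, ∀ y ∈ s, ¬G.Adj x y :=
  ⟨fun h _ hx _ hy hxy => h hx hy hxy.ne hxy, fun h x hx y hy _ => h x hx y hy⟩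

variable [Fintype V] [DecidableEq V]

theorem cliqueFinset_eq_filter_edgesOf_subset (G : SimpleGraph V) [DecidableRel G.Adj] (k : ℕ) :
    G.cliqueFinset k = {s ∈ powersetCard k (univ : Finset V) | edgesOf s ⊆ G.edgeFinset} := by
  ext s
  rw [mem_cliqueFinset_iff, isNClique_iff, isClique_iff_edgesOf_subset, ← coe_edgeFinset,
    coe_subset]
  simp [and_comm]

theorem card_le_three_mul_card_cliqueFinset {G : SimpleGraph V} [DecidableRel G.Adj]
    (h : ∀ v, ¬G.IsIndepSet (G.neighborSet v)) : Fintype.card V ≤ 3 * #(G.cliqueFinset 3) := by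
  have hcover : univ ⊆ (G.cliqueFinset 3).biUnion id := by
    intro v _
    obtain ⟨x, hx, y, hy, hxy, hadj⟩ :
        ∃ x ∈ G.neighborSet v, ∃ y ∈ G.neighborSet v, x ≠ y ∧ G.Adj x y := by
      simpa [IsIndepSet, Set.Pairwise] using h v
    rw [mem_neighborSet] at hx hy
    refine mem_biUnion.2 ⟨{v, x, y}, ?_, by simp⟩
    rw [mem_cliqueFinset_iff, is3Clique_triple_iff]
    exact ⟨hx, hy, hadj⟩
  calc Fintype.card V = #(univ : Finset V) := card_univ.symm
    _ ≤ ∑ s ∈ G.cliqueFinset 3, #s := (card_le_card hcover).trans card_biUnion_le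
    _ = 3 * #(G.cliqueFinset 3) := by
      rw [sum_congr rfl fun s hs => (mem_cliqueFinset_iff.1 hs).card_eq, sum_const, smul_eq_mul,
        mul_comm]

theorem edgesOf_subset_edgeFinset_top (s : Finset V) :
    edgesOf s ⊆ (⊤ : SimpleGraph V).edgeFinset := by
  rw [← coe_subset, coe_edgeFinset, ← isClique_iff_edgesOf_subset]
  exact fun _ _ _ _ hxy => hxy

open Classical in
theorem sum_edgeFinset {M : Type*} [AddCommMonoid M] (f : Finset (Sym2 V) → M) :
    ∑ G : SimpleGraph V, f G.edgeFinset =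
      ∑ t ∈ (⊤ : SimpleGraph V).edgeFinset.powerset, f t := by
  refine sum_nbij' (·.edgeFinset) (fun t => fromEdgeSet t) (fun G _ => ?_) (fun _ _ => mem_univ _)
    (fun G _ => ?_) (fun t ht => ?_) (fun G _ => rfl)
  · exact mem_powerset.2 (edgeFinset_subset_edgeFinset.2 le_top)
  · simp [fromEdgeSet_edgeSet]
  · rw [mem_powerset, ← coe_subset, coe_edgeFinset, edgeSet_top] at ht
    rw [← coe_inj, coe_edgeFinset, edgeSet_fromEdgeSet, sdiff_eq_left, Set.disjoint_left]
    exact fun e he he' => ht he he'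

end SimpleGraph

section GraphProb

variable {n : ℕ} {p : ℝ}

open Classical in
theorem graphProb_eq_sum (n : ℕ) (p : ℝ) (A : SimpleGraph (Fin n) → Prop) :
    graphProb n p A = ∑ G : SimpleGraph (Fin n),
      if A G then subsetProb p (⊤ : SimpleGraph (Fin n)).edgeFinset G.edgeFinset else 0 := by
  refine sum_congr rfl fun G _ => ?_
  rw [subsetProb, card_edgeFinset_top_eq_card_choose_two, Fintype.card_fin,
    Nat.card_eq_fintype_card, edgeFinset_card]

open Classical in
theorem graphProb_comp_edgeFinset (P : Finset (Sym2 (Fin n)) → Prop) [DecidablePred P] :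
    graphProb n p (fun G => P G.edgeFinset) =
      ∑ t ∈ (⊤ : SimpleGraph (Fin n)).edgeFinset.powerset with P t,
        subsetProb p (⊤ : SimpleGraph (Fin n)).edgeFinset t := by
  rw [graphProb_eq_sum, sum_filter]
  convert sum_edgeFinset fun t =>
    if P t then subsetProb p (⊤ : SimpleGraph (Fin n)).edgeFinset t else 0

theorem graphProb_true : graphProb n p (fun _ => True) = 1 := by
  rw [graphProb_comp_edgeFinset (P := fun _ => True), filter_true, sum_subsetProb]

theorem graphProb_not (A : SimpleGraph (Fin n) → Prop) :
    graphProb n p (fun G => ¬A G) = 1 - graphProb n p A := by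
  rw [eq_sub_iff_add_eq, ← graphProb_true (n := n) (p := p), graphProb_eq_sum, graphProb_eq_sum,
    graphProb_eq_sum, ← sum_add_distrib]
  refine sum_congr rfl fun G _ => ?_
  by_cases hA : A G <;> simp [hA]

theorem graphProb_mono (hp0 : 0 ≤ p) (hp1 : p ≤ 1) {A B : SimpleGraph (Fin n) → Prop}
    (h : ∀ G, A G → B G) : graphProb n p A ≤ graphProb n p B := by
  rw [graphProb_eq_sum, graphProb_eq_sum]
  refine sum_le_sum fun G _ => ?_
  split_ifs with hA hB
  · exact le_rfl
  · exact absurd (h G hA) hB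
  · exact subsetProb_nonneg hp0 hp1 _ _
  · exact le_rfl

theorem graphProb_le_one (hp0 : 0 ≤ p) (hp1 : p ≤ 1) (A : SimpleGraph (Fin n) → Prop) :
    graphProb n p A ≤ 1 :=
  graphProb_true (n := n) (p := p) ▸ graphProb_mono hp0 hp1 fun _ _ => trivial

end GraphProb

section Triangles

variable {α : Type*} [DecidableEq α] {p : ℝ}

theorem pow_card_edgesOf_union_sub_le (hp0 : 0 ≤ p) {a b : Finset α} (ha : #a = 3)
    (hb : #b = 3) :
    p ^ #(edgesOf a ∪ edgesOf b) - p ^ #(edgesOf a) * p ^ #(edgesOf b) ≤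
      (if a = b then p ^ 3 else 0) + (if #(a ∩ b) = 2 then p ^ 5 else 0) := by
  have h32 : Nat.choose 3 2 = 3 := rfl
  have hunion := card_edgesOf_union_add_choose a b
  rw [ha, hb, h32] at hunion
  rw [card_edgesOf, card_edgesOf, ha, hb, h32, ← pow_add]
  have h6 : 0 ≤ p ^ (3 + 3) := by positivity
  by_cases hab : a = b
  · subst hab
    have h5 : 0 ≤ (if #(a ∩ a) = 2 then p ^ 5 else 0) := by positivity
    rw [union_self, card_edgesOf, ha, h32, if_pos rfl]
    linarith
  have hk : #(a ∩ b) < 3 := by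
    refine lt_of_le_of_ne (ha ▸ card_le_card inter_subset_left) fun h => hab ?_
    exact (eq_of_subset_of_card_le inter_subset_left (by omega)).symm.trans
      (eq_of_subset_of_card_le inter_subset_right (by omega))
  rw [if_neg hab, zero_add]
  interval_cases h : #(a ∩ b)
  · rw [show #(edgesOf a ∪ edgesOf b) = 6 by simpa using hunion]
    norm_num
  · rw [show #(edgesOf a ∪ edgesOf b) = 6 by simpa using hunion]
    norm_num
  · rw [show #(edgesOf a ∪ edgesOf b) = 5 by simpa using hunion]
    norm_num at h6 ⊢
    linarith

theorem sum_sum_pow_card_edgesOf_union_sub_le [Fintype α] (hp0 : 0 ≤ p) :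
    ∑ a ∈ powersetCard 3 (univ : Finset α), ∑ b ∈ powersetCard 3 (univ : Finset α),
        (p ^ #(edgesOf a ∪ edgesOf b) - p ^ #(edgesOf a) * p ^ #(edgesOf b)) ≤
      (Fintype.card α).choose 3 * (p ^ 3 + 3 * Fintype.card α * p ^ 5) := by
  set T := powersetCard 3 (univ : Finset α)
  calc _ ≤ ∑ a ∈ T, ∑ b ∈ T,
          ((if a = b then p ^ 3 else 0) + (if #(a ∩ b) = 2 then p ^ 5 else 0)) :=
        sum_le_sum fun a ha => sum_le_sum fun b hb =>
          pow_card_edgesOf_union_sub_le hp0 (mem_powersetCard.1 ha).2 (mem_powersetCard.1 hb).2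
    _ = ∑ a ∈ T, (p ^ 3 + #{b ∈ T | #(a ∩ b) = 2} * p ^ 5) := by
        refine sum_congr rfl fun a ha => ?_
        rw [sum_add_distrib, sum_ite_eq, if_pos ha, ← sum_filter, sum_const, nsmul_eq_mul]
    _ ≤ ∑ a ∈ T, (p ^ 3 + 3 * Fintype.card α * p ^ 5) := by
        refine sum_le_sum fun a ha => ?_
        have hcount := card_filter_card_inter_eq_le a 2 3
        rw [(mem_powersetCard.1 ha).2] at hcount
        have : (#{b ∈ T | #(a ∩ b) = 2} : ℝ) ≤ 3 * Fintype.card α := by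
          exact_mod_cast hcount.trans_eq (by simp)
        gcongr
    _ = _ := by rw [sum_const, card_powersetCard, card_univ, nsmul_eq_mul]

end Triangles

open Classical in
theorem one_sub_graphProb_exists_isIndepSet_neighborSet_le {n : ℕ} (hn : 0 < n) {p : ℝ}
    (hp0 : 0 ≤ p) (hp1 : p ≤ 1) (hμ : (n.choose 3 : ℝ) * p ^ 3 ≤ n / 6) :
    1 - graphProb n p (fun G => ∃ v, G.IsIndepSet (G.neighborSet v)) ≤
      6 * n * p ^ 3 + 18 * n ^ 2 * p ^ 5 := by
  set K := (⊤ : SimpleGraph (Fin n)).edgeFinset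
  set T := powersetCard 3 (univ : Finset (Fin n))
  set μ := ∑ a ∈ T, p ^ #(edgesOf a) with hμ_def
  have hmean : μ = n.choose 3 * p ^ 3 := by
    rw [hμ_def, sum_congr rfl fun a ha => show p ^ #(edgesOf a) = p ^ 3 by
        rw [card_edgesOf, (mem_powersetCard.1 ha).2]; rfl,
      sum_const, card_powersetCard, card_univ, Fintype.card_fin, nsmul_eq_mul]
  have hmany : ∀ G : SimpleGraph (Fin n), (¬∃ v, G.IsIndepSet (G.neighborSet v)) →
      μ + n / 6 ≤ #{a ∈ T | edgesOf a ⊆ G.edgeFinset} := by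
    intro G hG
    push Not at hG
    have := card_le_three_mul_card_cliqueFinset hG
    rw [Fintype.card_fin, cliqueFinset_eq_filter_edgesOf_subset] at this
    have : (n : ℝ) ≤ 3 * #{a ∈ T | edgesOf a ⊆ G.edgeFinset} := by exact_mod_cast this
    linarith
  calc 1 - graphProb n p (fun G => ∃ v, G.IsIndepSet (G.neighborSet v))
      = graphProb n p (fun G => ¬∃ v, G.IsIndepSet (G.neighborSet v)) :=
        (graphProb_not _).symm
    _ ≤ graphProb n p (fun G => μ + n / 6 ≤ #{a ∈ T | edgesOf a ⊆ G.edgeFinset}) :=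
        graphProb_mono hp0 hp1 hmany
    _ = ∑ t ∈ K.powerset with μ + n / 6 ≤ #{a ∈ T | edgesOf a ⊆ t}, subsetProb p K t :=
        graphProb_comp_edgeFinset fun t => μ + n / 6 ≤ #{a ∈ T | edgesOf a ⊆ t}
    _ ≤ (∑ a ∈ T, ∑ b ∈ T,
          (p ^ #(edgesOf a ∪ edgesOf b) - p ^ #(edgesOf a) * p ^ #(edgesOf b))) / (n / 6) ^ 2 :=
        sum_subsetProb_filter_le_sum_covariance_div_sq hp0 hp1
          (fun a _ => edgesOf_subset_edgeFinset_top a) (by positivity)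
    _ ≤ (n ^ 3 / 6 * (p ^ 3 + 3 * n * p ^ 5)) / (n / 6) ^ 2 := by
        gcongr
        refine (sum_sum_pow_card_edgesOf_union_sub_le hp0).trans ?_
        rw [Fintype.card_fin]
        gcongr
        simpa [Nat.factorial] using Nat.choose_le_pow_div (α := ℝ) 3 n
    _ = 6 * n * p ^ 3 + 18 * n ^ 2 * p ^ 5 := by
        field_simp
        ring

theorem pow_mul_rpow_neg_pow_le_inv {x a : ℝ} (hx : 1 ≤ x) {j m : ℕ} (h : j + 1 ≤ a * m) :
    x ^ j * (x ^ (-a)) ^ m ≤ x⁻¹ := by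
  have hx0 : 0 < x := by linarith
  rw [← Real.rpow_natCast, ← Real.rpow_natCast, ← Real.rpow_mul hx0.le, ← Real.rpow_add hx0,
    ← Real.rpow_neg_one]
  exact Real.rpow_le_rpow_of_exponent_le hx (by linarith)

theorem one_sub_graphProb_rpow_exists_isIndepSet_neighborSet_le {n : ℕ} (hn : 1 ≤ n) {α : ℝ}
    (h0 : 2 / 3 ≤ α) :
    1 - graphProb n ((n : ℝ) ^ (-α)) (fun G => ∃ v, G.IsIndepSet (G.neighborSet v)) ≤
      24 / n := by
  set p := (n : ℝ) ^ (-α)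
  have hx : (1 : ℝ) ≤ n := by exact_mod_cast hn
  have hp0 : 0 ≤ p := Real.rpow_nonneg (by linarith) _
  have hp1 : p ≤ 1 := Real.rpow_le_one_of_one_le_of_nonpos hx (by linarith)
  have h3 := pow_mul_rpow_neg_pow_le_inv (a := α) (j := 1) (m := 3) hx (by push_cast; linarith)
  have h5 := pow_mul_rpow_neg_pow_le_inv (a := α) (j := 2) (m := 5) hx (by push_cast; linarith)
  have hμ : (n.choose 3 : ℝ) * p ^ 3 ≤ n / 6 :=
    calc (n.choose 3 : ℝ) * p ^ 3 ≤ n ^ 3 / 6 * p ^ 3 := by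
          gcongr
          simpa [Nat.factorial] using Nat.choose_le_pow_div (α := ℝ) 3 n
      _ = n ^ 2 / 6 * ((n : ℝ) ^ 1 * p ^ 3) := by ring
      _ ≤ n ^ 2 / 6 * (n : ℝ)⁻¹ := by gcongr
      _ = n / 6 := by field_simp
  have := one_sub_graphProb_exists_isIndepSet_neighborSet_le hn hp0 hp1 hμ
  rw [div_eq_mul_inv]
  linarith

theorem aas_exists_independent_neighborhood_general (α : ℝ) (h0 : 2 / 3 ≤ α) :
    Tendsto (fun n : ℕ => graphProb n ((n : ℝ) ^ (-α)) (fun G =>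
        ∃ v : Fin n, ∀ x ∈ G.neighborSet v, ∀ y ∈ G.neighborSet v, ¬ G.Adj x y))
      atTop (nhds 1) := by
  simp_rw [← isIndepSet_iff_forall_not_adj]
  have hlower : Tendsto (fun n : ℕ => 1 - 24 / (n : ℝ)) atTop (nhds 1) := by
    simpa using (tendsto_const_div_atTop_nhds_zero_nat (24 : ℝ)).const_sub 1
  refine tendsto_of_tendsto_of_tendsto_of_le_of_le' hlower tendsto_const_nhds ?_ ?_
  all_goals filter_upwards [eventually_ge_atTop 1] with n hn
  · linarith [one_sub_graphProb_rpow_exists_isIndepSet_neighborSet_le hn h0]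
  · have hx : (1 : ℝ) ≤ n := by exact_mod_cast hn
    exact graphProb_le_one (Real.rpow_nonneg (by linarith) _)
      (Real.rpow_le_one_of_one_le_of_nonpos hx (by linarith)) _

/-- For `2/3 ≤ α < 1` and `p = n^{-α}`, a.a.s. some vertex of `G(n,p)` has
an independent neighborhood. -/
theorem aas_exists_independent_neighborhood (α : ℝ) (h0 : 2 / 3 ≤ α) (h1 : α < 1) :
    Tendsto (fun n : ℕ => graphProb n ((n : ℝ) ^ (-α)) (fun G =>
        ∃ v : Fin n, ∀ x ∈ G.neighborSet v, ∀ y ∈ G.neighborSet v, ¬ G.Adj x y))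
      atTop (nhds 1) :=
  aas_exists_independent_neighborhood_general α h0
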